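/- arXiv:1904.08297 — 4 statements merged into one kernel-verified Lean document; each statement's English description precedes it below -/
import Mathlib

section
/- Let A be a Cohen ring (complete Noetherian local ring with maximal ideal pA) with residue field k of characteristic p. There exists a unique map s from k^(p^∞) := ∩_n k^(p^n) to A such that res(s(α)) = α and s(α) is a p^n-th power in A for every n ∈ ℕ. Moreover s is multiplicative: s(αβ) = s(α)s(β). -/
open IsLocalRing

/-!
If `x ≡ y [mod p]`, then `x ^ p ^ n ≡ y ^ p ^ n [mod p ^ (n + 1)]`. Hence if `α` has a
compatible system of `pⁿ`-th roots `βₙ` in the residue field, the `pⁿ`-th powers of arbitrary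
lifts of `βₙ` form a `p`-adic Cauchy sequence, whose limit is a lift of `α` with `pⁿ`-th roots
of all orders (the limits of the shifted sequences). Conversely, two lifts of `α` with `pⁿ`-th
roots of all orders are congruent mod `p ^ (n + 1)` for every `n`, because `pⁿ`-th roots are
unique in the residue field, and so they are equal. Multiplicativity follows from uniqueness,
since products of such lifts are again such lifts.
-/

def HasPPowRoots {M : Type*} [Monoid M] (p : ℕ) (x : M) : Prop :=
  ∀ n : ℕ, ∃ y : M, y ^ p ^ n = x

theorem HasPPowRoots.mul {M : Type*} [CommMonoid M] {p : ℕ} {x y : M}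
    (hx : HasPPowRoots p x) (hy : HasPPowRoots p y) : HasPPowRoots p (x * y) := fun n => by
  obtain ⟨a, rfl⟩ := hx n
  obtain ⟨b, rfl⟩ := hy n
  exact ⟨a * b, mul_pow a b _⟩

theorem eq_of_pow_pow_eq_of_charP {p : ℕ} {K : Type*} [CommRing K] [IsReduced K] [CharP K p]
    (hp : p.Prime) {a b : K} {n : ℕ} (h : a ^ p ^ n = b ^ p ^ n) : a = b :=
  have : Fact p.Prime := ⟨hp⟩
  iterateFrobenius_inj K p n h

section AdicallyComplete

variable {R : Type*} [CommRing R]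

theorem smodEq_span_singleton_pow_iff {r a b : R} {n : ℕ} :
    a ≡ b [SMOD (Ideal.span {r} ^ n • ⊤ : Submodule R R)] ↔ r ^ n ∣ a - b := by
  rw [SModEq.sub_mem, smul_eq_mul, Ideal.mul_top, Ideal.span_singleton_pow,
    Ideal.mem_span_singleton]

theorem eq_of_forall_pow_dvd_sub (r : R) [IsHausdorff (Ideal.span {r}) R] {x y : R}
    (h : ∀ n, r ^ n ∣ x - y) : x = y :=
  IsHausdorff.eq_iff_smodEq.mpr fun n => smodEq_span_singleton_pow_iff.mpr (h n)

theorem exists_forall_pow_dvd_sub_of_pow_dvd_sub_succ (r : R) [IsPrecomplete (Ideal.span {r}) R]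
    {f : ℕ → R} (hf : ∀ n, r ^ n ∣ f n - f (n + 1)) : ∃ L : R, ∀ n, r ^ n ∣ f n - L := by
  have hcauchy : AdicCompletion.IsAdicCauchy (Ideal.span {r}) R f :=
    (AdicCompletion.isAdicCauchy_iff _ _ f).mpr fun n => smodEq_span_singleton_pow_iff.mpr (hf n)
  obtain ⟨L, hL⟩ := IsPrecomplete.prec ‹_› hcauchy
  exact ⟨L, fun n => smodEq_span_singleton_pow_iff.mp (hL n)⟩

variable {p : ℕ}

theorem exists_forall_natCast_pow_dvd_pow_pow_sub [IsPrecomplete (Ideal.span {(p : R)}) R]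
    {a : ℕ → R} (ha : ∀ n, (p : R) ∣ a (n + 1) ^ p - a n) :
    ∃ L : R, ∀ n, (p : R) ^ n ∣ a n ^ p ^ n - L := by
  refine exists_forall_pow_dvd_sub_of_pow_dvd_sub_succ _ fun n => ?_
  rw [dvd_sub_comm, pow_succ', pow_mul]
  exact (pow_dvd_pow _ n.le_succ).trans (dvd_sub_pow_of_dvd_sub (ha n) n)

theorem exists_dvd_sub_hasPPowRoots [IsAdicComplete (Ideal.span {(p : R)}) R]
    {a : ℕ → R} (ha : ∀ n, (p : R) ∣ a (n + 1) ^ p - a n) :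
    ∃ x : R, (p : R) ∣ x - a 0 ∧ HasPPowRoots p x := by
  obtain ⟨x, hx⟩ := exists_forall_natCast_pow_dvd_pow_pow_sub ha
  refine ⟨x, ?_, fun m => ?_⟩
  · have hx1 : (p : R) ∣ a 1 ^ p - x := by simpa using hx 1
    simpa using dvd_sub (ha 0) hx1
  · obtain ⟨y, hy⟩ := exists_forall_natCast_pow_dvd_pow_pow_sub (a := fun n => a (n + m))
      fun n => by simpa only [Nat.add_right_comm] using ha (n + m)
    refine ⟨y, eq_of_forall_pow_dvd_sub (p : R) fun n => ?_⟩
    -- both sides are congruent to `a (n + m) ^ p ^ (n + m)` modulo `p ^ n`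
    have hpow : (a (n + m) ^ p ^ n) ^ p ^ m = a (n + m) ^ p ^ (n + m) := by
      rw [← pow_mul, ← pow_add]
    have hy' : (p : R) ^ n ∣ a (n + m) ^ p ^ (n + m) - y ^ p ^ m :=
      hpow ▸ (hy n).trans (sub_dvd_pow_sub_pow _ _ _)
    have hx' : (p : R) ^ n ∣ a (n + m) ^ p ^ (n + m) - x :=
      (pow_dvd_pow _ (n.le_add_right m)).trans (hx (n + m))
    simpa using dvd_sub hx' hy'

end AdicallyComplete

section CohenRing

variable {A : Type*} [CommRing A] [IsLocalRing A] {p : ℕ}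

theorem natCast_dvd_sub_iff_residue_eq (hmax : maximalIdeal A = Ideal.span {(p : A)}) {x y : A} :
    (p : A) ∣ x - y ↔ residue A x = residue A y := by
  rw [← Ideal.mem_span_singleton, ← hmax, ← sub_eq_zero, ← map_sub, residue_eq_zero_iff]

theorem eq_of_residue_eq_of_hasPPowRoots [CharP (ResidueField A) p] (hp : p.Prime)
    (hmax : maximalIdeal A = Ideal.span {(p : A)}) [IsHausdorff (Ideal.span {(p : A)}) A]
    {x y : A} (h : residue A x = residue A y) (hx : HasPPowRoots p x) (hy : HasPPowRoots p y) :
    x = y := by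
  refine eq_of_forall_pow_dvd_sub (p : A) fun n => ?_
  obtain ⟨a, rfl⟩ := hx n
  obtain ⟨b, rfl⟩ := hy n
  have hab : residue A a = residue A b :=
    eq_of_pow_pow_eq_of_charP hp (by simpa only [map_pow] using h)
  exact (pow_dvd_pow _ n.le_succ).trans
    (dvd_sub_pow_of_dvd_sub ((natCast_dvd_sub_iff_residue_eq hmax).mpr hab) n)

theorem exists_residue_eq_hasPPowRoots [CharP (ResidueField A) p] (hp : p.Prime)
    (hmax : maximalIdeal A = Ideal.span {(p : A)}) [IsAdicComplete (Ideal.span {(p : A)}) A]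
    {α : ResidueField A} (hα : HasPPowRoots p α) :
    ∃ x : A, residue A x = α ∧ HasPPowRoots p x := by
  choose β hβ using hα
  have hβ_succ : ∀ n, β (n + 1) ^ p = β n := fun n =>
    eq_of_pow_pow_eq_of_charP hp (n := n) (by rw [← pow_mul, ← pow_succ', hβ, hβ])
  choose a ha using fun n => residue_surjective (β n)
  obtain ⟨x, hx0, hx⟩ := exists_dvd_sub_hasPPowRoots fun n => by
    rw [natCast_dvd_sub_iff_residue_eq hmax, map_pow, ha, ha, hβ_succ]
  refine ⟨x, ?_, hx⟩
  rw [(natCast_dvd_sub_iff_residue_eq hmax).mp hx0, ha, ← hβ 0, pow_zero, pow_one]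

end CohenRing

theorem cohenRing_exists_unique_multiplicative_representatives_general
    {A : Type*} [CommRing A] [IsLocalRing A]
    (p : ℕ) (hp : p.Prime) [CharP (ResidueField A) p]
    (hmax : maximalIdeal A = Ideal.span {(p : A)})
    [IsAdicComplete (maximalIdeal A) A] :
    ∃ s : ResidueField A → A,
      (∀ α : ResidueField A, (∀ n : ℕ, ∃ β : ResidueField A, β ^ p ^ n = α) →
        residue A (s α) = α ∧ ∀ n : ℕ, ∃ a : A, a ^ p ^ n = s α) ∧
      (∀ s' : ResidueField A → A,
        (∀ α : ResidueField A, (∀ n : ℕ, ∃ β : ResidueField A, β ^ p ^ n = α) →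
          residue A (s' α) = α ∧ ∀ n : ℕ, ∃ a : A, a ^ p ^ n = s' α) →
        ∀ α : ResidueField A, (∀ n : ℕ, ∃ β : ResidueField A, β ^ p ^ n = α) →
          s' α = s α) ∧
      (∀ α β : ResidueField A,
        (∀ n : ℕ, ∃ γ : ResidueField A, γ ^ p ^ n = α) →
        (∀ n : ℕ, ∃ γ : ResidueField A, γ ^ p ^ n = β) →
        s (α * β) = s α * s β) := by
  have : IsAdicComplete (Ideal.span {(p : A)}) A := hmax ▸ ‹_›
  choose! s hs using fun α (hα : HasPPowRoots p α) => exists_residue_eq_hasPPowRoots hp hmax hα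
  refine ⟨s, hs, fun s' hs' α hα => ?_, fun α β hα hβ => ?_⟩
  · exact eq_of_residue_eq_of_hasPPowRoots hp hmax ((hs' α hα).1.trans (hs α hα).1.symm)
      (hs' α hα).2 (hs α hα).2
  · obtain ⟨hαβ_res, hαβ_roots⟩ := hs _ (HasPPowRoots.mul hα hβ)
    refine eq_of_residue_eq_of_hasPPowRoots hp hmax ?_ hαβ_roots ((hs α hα).2.mul (hs β hβ).2)
    rw [hαβ_res, map_mul, (hs α hα).1, (hs β hβ).1]

/-- Teichmüller representatives: in a Cohen ring `A` with residue field `k`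
of characteristic `p`, there is a unique map `s` on the largest perfect
subfield `k^(p^∞) = {α | ∀ n, α is a pⁿ-th power}` such that `s α` is a
representative of `α` which is a `pⁿ`-th power for every `n`; moreover `s`
is multiplicative. -/
theorem cohenRing_exists_unique_multiplicative_representatives
    {A : Type*} [CommRing A] [IsLocalRing A] [IsNoetherianRing A]
    (p : ℕ) (hp : p.Prime) [CharP (ResidueField A) p]
    (hmax : maximalIdeal A = Ideal.span {(p : A)})
    [IsAdicComplete (maximalIdeal A) A] :
    ∃ s : ResidueField A → A,
      (∀ α : ResidueField A, (∀ n : ℕ, ∃ β : ResidueField A, β ^ p ^ n = α) →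
        residue A (s α) = α ∧ ∀ n : ℕ, ∃ a : A, a ^ p ^ n = s α) ∧
      (∀ s' : ResidueField A → A,
        (∀ α : ResidueField A, (∀ n : ℕ, ∃ β : ResidueField A, β ^ p ^ n = α) →
          residue A (s' α) = α ∧ ∀ n : ℕ, ∃ a : A, a ^ p ^ n = s' α) →
        ∀ α : ResidueField A, (∀ n : ℕ, ∃ β : ResidueField A, β ^ p ^ n = α) →
          s' α = s α) ∧
      (∀ α β : ResidueField A,
        (∀ n : ℕ, ∃ γ : ResidueField A, γ ^ p ^ n = α) →
        (∀ n : ℕ, ∃ γ : ResidueField A, γ ^ p ^ n = β) →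
        s (α * β) = s α * s β) :=
  cohenRing_exists_unique_multiplicative_representatives_general p hp hmax
end

section
/- Let k be a field of characteristic p, β₁,…,β_r p-independent elements, and l ≤ m natural numbers. Then the λ-maps satisfy the compatibility λ_J ∘ λ_I = λ_{I⊕J}, where for I ∈ P_{r,l} and J ∈ P_{r,m-l}, I⊕J := (i_μ + p^l j_μ)_μ; i.e., for α ∈ k^{p^m}(β): λ_J(λ_I(α)) = λ_{I⊕J}(α). -/
private lemma add_mul_lt {a b i j : ℕ} (hi : i < a) (hj : j < b) :
    i + a * j < a * b :=
  calc i + a * j < a + a * j := by omega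
    _ = a * (j + 1) := by ring
    _ ≤ a * b := Nat.mul_le_mul_left a hj

/-- The addition map `⊕ : P_{r,l} × P_{r,m-l} → P_{r,m}`. -/
def oplus (p r l m : ℕ) (h : l ≤ m)
    (I : Fin r → Fin (p ^ l)) (J : Fin r → Fin (p ^ (m - l))) :
    Fin r → Fin (p ^ m) := fun μ =>
  ⟨(I μ : ℕ) + p ^ l * (J μ : ℕ), by
    have := add_mul_lt (I μ).isLt (J μ).isLt
    rwa [← pow_add, Nat.add_sub_cancel' h] at this⟩

/-- Base-`A` digit decomposition equivalence. -/
def digitEquiv (r A B C : ℕ) (hC : C = A * B) (hA : 0 < A) :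
    (Fin r → Fin A) × (Fin r → Fin B) ≃ (Fin r → Fin C) where
  toFun IJ := fun μ => ⟨(IJ.1 μ : ℕ) + A * (IJ.2 μ : ℕ), by
    rw [hC]; exact add_mul_lt (IJ.1 μ).isLt (IJ.2 μ).isLt⟩
  invFun K :=
    (fun μ => ⟨(K μ : ℕ) % A, Nat.mod_lt _ hA⟩,
     fun μ => ⟨(K μ : ℕ) / A, Nat.div_lt_of_lt_mul (hC ▸ (K μ).isLt)⟩)
  left_inv IJ := by
    ext μ
    · simp only [Nat.add_mul_mod_self_left]
      exact Nat.mod_eq_of_lt (IJ.1 μ).isLt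
    · simp only [Nat.add_mul_div_left _ _ hA]
      rw [Nat.div_eq_of_lt (IJ.1 μ).isLt, Nat.zero_add]
  right_inv K := by
    funext μ; exact Fin.ext (Nat.mod_add_div _ _)

private lemma indep_all {k : Type*} [Field k] (p : ℕ) (hp : p.Prime) [CharP k p]
    (r : ℕ) (β : Fin r → k)
    (hβ : LinearIndependent ↥(Subfield.closure (Set.range fun x : k => x ^ p))
      (fun I : Fin r → Fin p => ∏ j, β j ^ (I j : ℕ))) :
    ∀ (m : ℕ) (f : (Fin r → Fin (p ^ m)) → k),
      (∑ I : Fin r → Fin (p ^ m), (∏ j, β j ^ (I j : ℕ)) * f I ^ p ^ m) = 0 →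
      ∀ I, f I = 0 := by
  haveI : Fact p.Prime := ⟨hp⟩
  intro m
  induction m with
  | zero =>
    intro f hf I
    letI : Unique (Fin (p ^ 0)) :=
      ⟨⟨⟨0, by simp⟩⟩, fun a => Fin.ext (by have := a.isLt; simp only [pow_zero, Nat.lt_one_iff] at this; simp [this])⟩
    letI : Unique (Fin r → Fin (p ^ 0)) := Pi.unique
    rw [Fintype.sum_unique] at hf
    have hprod : (∏ j : Fin r, β j ^ ((default : Fin r → Fin (p ^ 0)) j : ℕ)) = 1 :=
      Finset.prod_eq_one fun j _ => pow_zero (β j)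
    have hpow : ∀ x : k, x ^ p ^ 0 = x := fun x => by rw [pow_zero, pow_one]
    have hfd : f default = 0 := by
      calc f default
          = (∏ j : Fin r, β j ^ ((default : Fin r → Fin (p ^ 0)) j : ℕ)) *
            f default ^ p ^ 0 := by rw [hprod, hpow, one_mul]
        _ = 0 := hf
    rw [Subsingleton.elim I default]
    exact hfd
  | succ m ih =>
    intro f hf I
    set S := Subfield.closure (Set.range fun x : k => x ^ p) with hS
    let e := digitEquiv r p (p ^ m) (p ^ (m + 1)) (by rw [pow_succ']) hp.pos
    -- rewrite the sum over the product
    rw [← Equiv.sum_comp e, Fintype.sum_prod_type] at hf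
    have key : ∀ I₀ : Fin r → Fin p, ∀ I₁ : Fin r → Fin (p ^ m),
        (∏ j, β j ^ ((e (I₀, I₁)) j : ℕ)) * f (e (I₀, I₁)) ^ p ^ (m + 1)
          = (∏ j, β j ^ (I₀ j : ℕ)) *
            ((∏ j, β j ^ (I₁ j : ℕ)) * f (e (I₀, I₁)) ^ p ^ m) ^ p := by
      intro I₀ I₁
      have h1 : (∏ j, β j ^ ((e (I₀, I₁)) j : ℕ))
          = (∏ j, β j ^ (I₀ j : ℕ)) * (∏ j, β j ^ (I₁ j : ℕ)) ^ p := by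
        rw [← Finset.prod_pow, ← Finset.prod_mul_distrib]
        refine Finset.prod_congr rfl fun j _ => ?_
        show β j ^ ((I₀ j : ℕ) + p * (I₁ j : ℕ)) = _
        rw [pow_add, pow_mul']
      rw [h1, mul_pow, ← pow_mul, ← pow_succ]
      ring
    simp only [key] at hf
    have hf2 : ∑ I₀ : Fin r → Fin p,
        (fun I₀ => ((∑ I₁ : Fin r → Fin (p ^ m),
          (∏ j, β j ^ (I₁ j : ℕ)) * f (e (I₀, I₁)) ^ p ^ m) ^ p)) I₀ •
        (∏ j, β j ^ (I₀ j : ℕ)) = 0 := by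
      simp only [smul_eq_mul]
      rw [← hf]
      refine Finset.sum_congr rfl fun I₀ _ => ?_
      rw [sum_pow_char, Finset.sum_mul]
      exact Finset.sum_congr rfl fun _ _ => mul_comm _ _
    have hmem : ∀ I₀ : Fin r → Fin p,
        ((∑ I₁ : Fin r → Fin (p ^ m),
          (∏ j, β j ^ (I₁ j : ℕ)) * f (e (I₀, I₁)) ^ p ^ m) ^ p) ∈ S :=
      fun I₀ => Subfield.subset_closure ⟨_, rfl⟩
    have hzero : ∀ I₀ : Fin r → Fin p,
        (∑ I₁ : Fin r → Fin (p ^ m),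
          (∏ j, β j ^ (I₁ j : ℕ)) * f (e (I₀, I₁)) ^ p ^ m) = 0 := by
      intro I₀
      have := (Fintype.linearIndependent_iff.mp hβ)
        (fun I₀ => (⟨_, hmem I₀⟩ : S))
        (by
          rw [← hf2]
          rfl) I₀
      have hp0 : ((⟨_, hmem I₀⟩ : S) : k) = 0 := by rw [this]; rfl
      exact pow_eq_zero_iff hp.ne_zero |>.mp hp0
    have hall : ∀ I₀ I₁, f (e (I₀, I₁)) = 0 := fun I₀ I₁ =>
      ih (fun I₁ => f (e (I₀, I₁))) (hzero I₀) I₁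
    have : I = e (e.symm I) := (e.apply_symm_apply I).symm
    rw [this]
    exact hall _ _

/-- Compatibility of the `λ`-maps: if `β` is `p`-independent, `α` has the
level-`m` expansion `α = Σ_{I ∈ P_{r,m}} β^I · λ_I(α)^{p^m}` and the
level-`l` expansion with coefficients `μ_I`, and each `μ_I` has expansion
`μ_I = Σ_{J ∈ P_{r,m-l}} β^J · ν_{I,J}^{p^{m-l}}`, then
`ν_{I,J} = λ_{I ⊕ J}(α)`, i.e. `λ_J ∘ λ_I = λ_{I ⊕ J}`. -/
theorem lambda_map_comp_eq_lambda_oplus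
    {k : Type*} [Field k] (p : ℕ) (hp : p.Prime) [CharP k p]
    (r : ℕ) (β : Fin r → k)
    (hβ : LinearIndependent ↥(Subfield.closure (Set.range fun x : k => x ^ p))
      (fun I : Fin r → Fin p => ∏ j, β j ^ (I j : ℕ)))
    (l m : ℕ) (h : l ≤ m) (α : k)
    (lamM : (Fin r → Fin (p ^ m)) → k)
    (hlamM : α = ∑ I : Fin r → Fin (p ^ m),
      (∏ j, β j ^ (I j : ℕ)) * lamM I ^ p ^ m)
    (lamL : (Fin r → Fin (p ^ l)) → k)
    (hlamL : α = ∑ I : Fin r → Fin (p ^ l),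
      (∏ j, β j ^ (I j : ℕ)) * lamL I ^ p ^ l)
    (nu : (Fin r → Fin (p ^ l)) → (Fin r → Fin (p ^ (m - l))) → k)
    (hnu : ∀ I : Fin r → Fin (p ^ l), lamL I =
      ∑ J : Fin r → Fin (p ^ (m - l)),
        (∏ j, β j ^ (J j : ℕ)) * nu I J ^ p ^ (m - l)) :
    ∀ (I : Fin r → Fin (p ^ l)) (J : Fin r → Fin (p ^ (m - l))),
      nu I J = lamM (oplus p r l m h I J) := by
  haveI : Fact p.Prime := ⟨hp⟩
  intro I J
  let e := digitEquiv r (p ^ l) (p ^ (m - l)) (p ^ m)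
    (by rw [← pow_add, Nat.add_sub_cancel' h]) (pow_pos hp.pos l)
  have hoplus : ∀ (I : Fin r → Fin (p ^ l)) (J : Fin r → Fin (p ^ (m - l))),
      oplus p r l m h I J = e (I, J) := fun _ _ => rfl
  -- α as a level-m sum with coefficients nu
  have hα : α = ∑ K : Fin r → Fin (p ^ m),
      (∏ j, β j ^ (K j : ℕ)) * nu (e.symm K).1 (e.symm K).2 ^ p ^ m := by
    rw [← Equiv.sum_comp e, Fintype.sum_prod_type]
    have step : ∀ (I : Fin r → Fin (p ^ l)) (J : Fin r → Fin (p ^ (m - l))),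
        (∏ j, β j ^ ((e (I, J)) j : ℕ)) *
          nu (e.symm (e (I, J))).1 (e.symm (e (I, J))).2 ^ p ^ m
        = (∏ j, β j ^ (I j : ℕ)) *
          ((∏ j, β j ^ (J j : ℕ)) * nu I J ^ p ^ (m - l)) ^ p ^ l := by
      intro I J
      rw [e.symm_apply_apply]
      have h1 : (∏ j, β j ^ ((e (I, J)) j : ℕ))
          = (∏ j, β j ^ (I j : ℕ)) * (∏ j, β j ^ (J j : ℕ)) ^ p ^ l := by
        rw [← Finset.prod_pow, ← Finset.prod_mul_distrib]
        refine Finset.prod_congr rfl fun j _ => ?_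
        show β j ^ ((I j : ℕ) + p ^ l * (J j : ℕ)) = _
        rw [pow_add, pow_mul']
      have h2 : nu I J ^ p ^ m = (nu I J ^ p ^ (m - l)) ^ p ^ l := by
        rw [← pow_mul, ← pow_add, Nat.sub_add_cancel h]
      rw [h1, h2, mul_pow]
      ring
    simp only [step]
    calc α = ∑ I' : Fin r → Fin (p ^ l),
        (∏ j, β j ^ (I' j : ℕ)) * lamL I' ^ p ^ l := hlamL
      _ = _ := by
        refine Finset.sum_congr rfl fun I' _ => ?_
        rw [hnu I', sum_pow_char_pow, Finset.mul_sum]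
  -- compare the two level-m expansions
  have hdiff : ∑ K : Fin r → Fin (p ^ m), (∏ j, β j ^ (K j : ℕ)) *
      (lamM K - nu (e.symm K).1 (e.symm K).2) ^ p ^ m = 0 := by
    have := hlamM.symm.trans hα
    calc ∑ K : Fin r → Fin (p ^ m), (∏ j, β j ^ (K j : ℕ)) *
        (lamM K - nu (e.symm K).1 (e.symm K).2) ^ p ^ m
        = (∑ K : Fin r → Fin (p ^ m), (∏ j, β j ^ (K j : ℕ)) * lamM K ^ p ^ m)
          - ∑ K : Fin r → Fin (p ^ m), (∏ j, β j ^ (K j : ℕ)) *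
            nu (e.symm K).1 (e.symm K).2 ^ p ^ m := by
          rw [← Finset.sum_sub_distrib]
          refine Finset.sum_congr rfl fun K _ => ?_
          rw [sub_pow_char_pow, mul_sub]
      _ = 0 := by rw [← hlamM, ← hα, sub_self]
  have hzero := indep_all p hp r β hβ m
    (fun K => lamM K - nu (e.symm K).1 (e.symm K).2) hdiff
  have := hzero (e (I, J))
  simp only [Equiv.symm_apply_apply] at this
  rw [hoplus I J]
  exact (sub_eq_zero.mp this).symm
end

section
/- Let (A, k) be a pre-Cohen ring of characteristic p^m (so m_A^m = 0), β a p-independent tuple in k with representatives s, and α ∈ k^{p^m}(β). Then there is exactly one λ(s,m)-representative of α in A. -/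
open IsLocalRing

/-- In a pre-Cohen ring of characteristic `p ^ m`, each `α ∈ k^{p^m}(β)` has
exactly one `λ(s,m)`-representative. -/
theorem lambda_representative_unique_of_charP
    {A : Type*} [CommRing A] [IsLocalRing A] [IsNoetherianRing A]
    (p : ℕ) (hp : p.Prime) [CharP (ResidueField A) p]
    (hmax : maximalIdeal A = Ideal.span {(p : A)})
    (r m : ℕ) (hm : 0 < m) [CharP A (p ^ m)]
    (β : Fin r → ResidueField A)
    (hβ : LinearIndependent
      ↥(Subfield.closure (Set.range fun x : ResidueField A => x ^ p))
      (fun I : Fin r → Fin p => ∏ j, β j ^ (I j : ℕ)))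
    (s : Fin r → A) (hs : ∀ j, residue A (s j) = β j)
    (α : ResidueField A)
    (lam : (Fin r → Fin (p ^ m)) → ResidueField A)
    (hlam : α = ∑ I : Fin r → Fin (p ^ m),
      (∏ j, β j ^ (I j : ℕ)) * lam I ^ p ^ m) :
    ∃! a : A,
      ∃ t : (Fin r → Fin (p ^ m)) → A, (∀ I, residue A (t I) = lam I) ∧
        a - ∑ I : Fin r → Fin (p ^ m), (∏ j, s j ^ (I j : ℕ)) * t I ^ p ^ m
          ∈ maximalIdeal A ^ m := by
  -- `p^m = 0` in `A`
  have hpm : ((p : A)) ^ m = 0 := by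
    have := CharP.cast_eq_zero A (p ^ m)
    push_cast at this
    exact this
  -- `m^m = ⊥`
  have hzero : maximalIdeal A ^ m = ⊥ := by
    rw [hmax, Ideal.span_singleton_pow, Ideal.span_singleton_eq_bot]
    exact hpm
  -- choose lifts
  choose t ht using fun I : Fin r → Fin (p ^ m) =>
    Ideal.Quotient.mk_surjective (I := maximalIdeal A) (lam I)
  -- key: the sum only depends on `lam`
  have key : ∀ t' : (Fin r → Fin (p ^ m)) → A, (∀ I, residue A (t' I) = lam I) →
      ∀ I, t' I ^ p ^ m = t I ^ p ^ m := by
    intro t' ht' I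
    have hmem : t' I - t I ∈ maximalIdeal A := by
      have : residue A (t' I - t I) = 0 := by
        rw [map_sub, ht', show residue A (t I) = lam I from ht I, sub_self]
      exact (Ideal.Quotient.eq_zero_iff_mem).mp this
    rw [hmax, Ideal.mem_span_singleton] at hmem
    have hdvd := dvd_sub_pow_of_dvd_sub hmem m
    obtain ⟨c, hc⟩ := hdvd
    have : (p : A) ^ (m + 1) = 0 := by
      rw [pow_succ, hpm, zero_mul]
    rw [this, zero_mul] at hc
    exact sub_eq_zero.mp hc
  refine ⟨∑ I : Fin r → Fin (p ^ m), (∏ j, s j ^ (I j : ℕ)) * t I ^ p ^ m,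
    ⟨t, fun I => ht I, by simp⟩, ?_⟩
  rintro b ⟨t', ht', hb⟩
  rw [hzero, Ideal.mem_bot, sub_eq_zero] at hb
  rw [hb]
  exact Finset.sum_congr rfl fun I _ => by rw [key t' ht' I]
end

section
/- Let (B, l) be a pre-Cohen ring with Cohen subrings (A₁, k₁) and (A₂, k₂) such that k₁ ⊆ k₂ and k₂/k₁ is a separable field extension. Let β be a p-basis of k₁ with representatives s : β → A₁. If s(β) ⊆ A₂, then A₁ ⊆ A₂ (Mac Lane's Identity Theorem). Equivalently, A₁ is contained in the closure of A₂ in the m_B-adic topology, and A₂ is closed. -/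
open IsLocalRing

lemma macLane_aux_closure {K : Type*} [Field K] {p : ℕ} (hp : p.Prime) [CharP K p]
    {ι : Type*} (β : ι → K)
    (hβspan : Subfield.closure (Set.range (fun x : K => x ^ p) ∪ Set.range β) = ⊤)
    (n : ℕ) :
    Subring.closure (Set.range (fun x : K => x ^ p ^ n) ∪ Set.range β) = (⊤ : Subring K) := by
  haveI : Fact p.Prime := ⟨hp⟩
  induction n with
  | zero =>
    rw [eq_top_iff]
    intro x _
    exact Subring.subset_closure (Or.inl ⟨x, by simp⟩)
  | succ n ih =>
    set R := Subring.closure (Set.range (fun x : K => x ^ p ^ (n + 1)) ∪ Set.range β) with hR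
    have hinv : ∀ x ∈ R, x⁻¹ ∈ R := by
      intro x hx
      rcases eq_or_ne x 0 with rfl | hx0
      · simpa using R.zero_mem
      · have h1 : (x⁻¹) ^ p ^ (n + 1) ∈ R := Subring.subset_closure (Or.inl ⟨x⁻¹, rfl⟩)
        have h2 : x ^ (p ^ (n + 1) - 1) ∈ R := pow_mem hx _
        have hpow : (0:ℕ) < p ^ (n + 1) := pow_pos hp.pos _
        have hx' : x⁻¹ = x ^ (p ^ (n + 1) - 1) * (x⁻¹) ^ p ^ (n + 1) := by
          rw [inv_pow, ← pow_sub_one_mul (by omega : p ^ (n+1) ≠ 0) x]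
          field_simp
        rw [hx']
        exact mul_mem h2 h1
    let F : Subfield K :=
      { R with inv_mem' := hinv }
    have hfrob : ∀ x : K, x ^ p ∈ R := by
      intro x
      have hx : x ∈ Subring.closure (Set.range (fun x : K => x ^ p ^ n) ∪ Set.range β) := by
        rw [ih]; trivial
      induction hx using Subring.closure_induction with
      | mem z hz =>
        rcases hz with ⟨w, rfl⟩ | ⟨j, rfl⟩
        · have : (w ^ p ^ n) ^ p = w ^ p ^ (n + 1) := by
            rw [← pow_mul, pow_succ]
          rw [this]
          exact Subring.subset_closure (Or.inl ⟨w, rfl⟩)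
        · have hb : (β j : K) ∈ R := Subring.subset_closure (Or.inr ⟨j, rfl⟩)
          exact pow_mem hb p
      | zero => simpa [zero_pow hp.ne_zero] using R.zero_mem
      | one => simpa using R.one_mem
      | add a b _ _ ha hb => rw [add_pow_char a b p]; exact add_mem ha hb
      | neg a _ ha =>
        have : (-a) ^ p = -(a ^ p) := by
          have := sub_pow_char (0:K) a (p := p)
          simpa [zero_pow hp.ne_zero] using this
        rw [this]; exact neg_mem ha
      | mul a b _ _ ha hb => rw [mul_pow]; exact mul_mem ha hb
    have htop : (⊤ : Subfield K) ≤ F := by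
      rw [← hβspan]
      apply Subfield.closure_le.mpr
      rintro z (⟨w, rfl⟩ | ⟨j, rfl⟩)
      · exact hfrob w
      · exact Subring.subset_closure (Or.inr ⟨j, rfl⟩)
    rw [eq_top_iff]
    intro x _
    exact htop (by trivial : x ∈ (⊤ : Subfield K))

/-- Mac Lane's Identity Theorem.  Let `(B, l)` be a pre-Cohen ring with
Cohen subrings `(A₁, k₁)` and `(A₂, k₂)` such that `k₁ ⊆ k₂` and `k₂/k₁` is
separable (every `p`-independent tuple of `k₁` stays `p`-independent in
`k₂`).  If `β` is a `p`-basis of `k₁` with representatives `s : β → A₁` and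
`s(β) ⊆ A₂`, then `A₁ ⊆ A₂`. -/
theorem macLane_identity
    {B : Type*} [CommRing B] [IsLocalRing B] [IsNoetherianRing B]
    (p : ℕ) (hp : p.Prime) [CharP (ResidueField B) p]
    (hmaxB : maximalIdeal B = Ideal.span {(p : B)})
    (A₁ A₂ : Subring B)
    [IsLocalRing ↥A₁] [IsNoetherianRing ↥A₁]
    [IsLocalRing ↥A₂] [IsNoetherianRing ↥A₂]
    (hmax₁ : maximalIdeal ↥A₁ = Ideal.span {(p : ↥A₁)})
    (hmax₂ : maximalIdeal ↥A₂ = Ideal.span {(p : ↥A₂)})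
    [IsAdicComplete (maximalIdeal ↥A₁) ↥A₁]
    [IsAdicComplete (maximalIdeal ↥A₂) ↥A₂]
    (k₁ k₂ : Subfield (ResidueField B))
    (hk₁ : A₁.map (residue B) = k₁.toSubring)
    (hk₂ : A₂.map (residue B) = k₂.toSubring)
    (hk₁₂ : k₁ ≤ k₂)
    -- separability of `k₂ / k₁`: `p`-independent tuples of `k₁`
    -- remain `p`-independent in `k₂`
    (hsep : ∀ (n : ℕ) (γ : Fin n → ↥k₁),
      LinearIndependent ↥(Subfield.closure (Set.range fun x : ↥k₁ => x ^ p))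
        (fun I : Fin n → Fin p => ∏ j, γ j ^ (I j : ℕ)) →
      LinearIndependent ↥(Subfield.closure (Set.range fun x : ↥k₂ => x ^ p))
        (fun I : Fin n → Fin p => ∏ j, Subfield.inclusion hk₁₂ (γ j) ^ (I j : ℕ)))
    -- `β` is a `p`-basis of `k₁`:
    {ι : Type*} (β : ι → ↥k₁)
    (hβind : ∀ t : Finset ι,
      LinearIndependent ↥(Subfield.closure (Set.range fun x : ↥k₁ => x ^ p))
        (fun I : { x // x ∈ t } → Fin p => ∏ j, β j.1 ^ (I j : ℕ)))
    (hβspan : Subfield.closure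
      (Set.range (fun x : ↥k₁ => x ^ p) ∪ Set.range β) = ⊤)
    -- representatives `s : β → A₁` with `s(β) ⊆ A₂`
    (s : ι → B) (hsA₁ : ∀ j, s j ∈ A₁)
    (hres : ∀ j, residue B (s j) = ((β j : ↥k₁) : ResidueField B))
    (hsA₂ : ∀ j, s j ∈ A₂) :
    A₁ ≤ A₂ := by
  haveI : Fact p.Prime := ⟨hp⟩
  haveI : CharP ↥k₁ p := RingHom.charP k₁.subtype Subtype.val_injective p
  have hclos := macLane_aux_closure hp β hβspan
  have hres0 : ∀ x : B, residue B x = 0 ↔ x ∈ maximalIdeal B := fun x =>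
    Ideal.Quotient.eq_zero_iff_mem
  have hA₁max : ∀ x : ↥A₁, (x : B) ∈ maximalIdeal B → x ∈ maximalIdeal ↥A₁ := by
    intro x hx
    rw [IsLocalRing.mem_maximalIdeal, mem_nonunits_iff]
    intro hu
    exact mem_nonunits_iff.mp ((IsLocalRing.mem_maximalIdeal _).mp hx) (hu.map A₁.subtype)
  have hA₂max : ∀ x : ↥A₂, (x : B) ∈ maximalIdeal B → x ∈ maximalIdeal ↥A₂ := by
    intro x hx
    rw [IsLocalRing.mem_maximalIdeal, mem_nonunits_iff]
    intro hu
    exact mem_nonunits_iff.mp ((IsLocalRing.mem_maximalIdeal _).mp hx) (hu.map A₂.subtype)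
  have lift₁ : ∀ z : ↥k₁, ∃ x, x ∈ A₁ ∧ residue B x = ↑z := by
    intro z
    have hz : (↑z : ResidueField B) ∈ A₁.map (residue B) := by
      rw [hk₁]; exact z.2
    obtain ⟨x, hx, hx'⟩ := hz
    exact ⟨x, hx, hx'⟩
  have lift₂ : ∀ z : ↥k₁, ∃ y, y ∈ A₂ ∧ residue B y = ↑z := by
    intro z
    have hz : (↑z : ResidueField B) ∈ A₂.map (residue B) := by
      rw [hk₂]; exact hk₁₂ z.2
    obtain ⟨y, hy, hy'⟩ := hz
    exact ⟨y, hy, hy'⟩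
  -- main approximation claim
  have claim : ∀ n : ℕ, ∀ b : B, b ∈ A₁ → ∃ c, c ∈ A₂ ∧ b - c ∈ Ideal.span {(p:B)^n} := by
    intro n
    induction n with
    | zero =>
      intro b hb
      exact ⟨0, A₂.zero_mem, by simp [Ideal.mem_span_singleton]⟩
    | succ n ih =>
      intro b hb
      have key : ∀ z : ↥k₁, ∃ x y : B, x ∈ A₁ ∧ y ∈ A₂ ∧ residue B x = ↑z ∧
          x - y ∈ Ideal.span {(p:B)^(n+1)} := by
        intro z
        have hz : z ∈ Subring.closure
            (Set.range (fun x : ↥k₁ => x ^ p ^ n) ∪ Set.range β) := by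
          rw [hclos n]; trivial
        induction hz using Subring.closure_induction with
        | mem w hw =>
          rcases hw with ⟨u, rfl⟩ | ⟨j, rfl⟩
          · obtain ⟨x₀, hx₀, hrx₀⟩ := lift₁ u
            obtain ⟨y₀, hy₀, hry₀⟩ := lift₂ u
            refine ⟨x₀ ^ p ^ n, y₀ ^ p ^ n, pow_mem hx₀ _, pow_mem hy₀ _, ?_, ?_⟩
            · rw [map_pow, hrx₀]; norm_cast
            · rw [Ideal.mem_span_singleton]
              have hd : (p:B) ∣ x₀ - y₀ := by
                have h0 : residue B (x₀ - y₀) = 0 := by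
                  rw [map_sub, hrx₀, hry₀, sub_self]
                have hm := (hres0 _).mp h0
                rw [hmaxB, Ideal.mem_span_singleton] at hm
                exact hm
              exact_mod_cast dvd_sub_pow_of_dvd_sub hd n
          · exact ⟨s j, s j, hsA₁ j, hsA₂ j, hres j, by simp⟩
        | zero => exact ⟨0, 0, A₁.zero_mem, A₂.zero_mem, by simp, by simp⟩
        | one => exact ⟨1, 1, A₁.one_mem, A₂.one_mem, by simp, by simp⟩
        | add z₁ z₂ _ _ h₁ h₂ =>
          obtain ⟨x₁, y₁, hx₁, hy₁, hr₁, hd₁⟩ := h₁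
          obtain ⟨x₂, y₂, hx₂, hy₂, hr₂, hd₂⟩ := h₂
          refine ⟨x₁ + x₂, y₁ + y₂, add_mem hx₁ hx₂, add_mem hy₁ hy₂, ?_, ?_⟩
          · rw [map_add, hr₁, hr₂]; norm_cast
          · have h : x₁ + x₂ - (y₁ + y₂) = (x₁ - y₁) + (x₂ - y₂) := by ring
            rw [h]; exact add_mem hd₁ hd₂
        | neg z₁ _ h₁ =>
          obtain ⟨x₁, y₁, hx₁, hy₁, hr₁, hd₁⟩ := h₁
          refine ⟨-x₁, -y₁, neg_mem hx₁, neg_mem hy₁, ?_, ?_⟩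
          · rw [map_neg, hr₁]; norm_cast
          · have h : -x₁ - -y₁ = -(x₁ - y₁) := by ring
            rw [h]; exact neg_mem hd₁
        | mul z₁ z₂ _ _ h₁ h₂ =>
          obtain ⟨x₁, y₁, hx₁, hy₁, hr₁, hd₁⟩ := h₁
          obtain ⟨x₂, y₂, hx₂, hy₂, hr₂, hd₂⟩ := h₂
          refine ⟨x₁ * x₂, y₁ * y₂, mul_mem hx₁ hx₂, mul_mem hy₁ hy₂, ?_, ?_⟩
          · rw [map_mul, hr₁, hr₂]; norm_cast
          · have h : x₁ * x₂ - y₁ * y₂ = x₁ * (x₂ - y₂) + (x₁ - y₁) * y₂ := by ring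
            rw [h]
            exact add_mem (Ideal.mul_mem_left _ _ hd₂) (Ideal.mul_mem_right _ _ hd₁)
      have hrb : residue B b ∈ k₁.toSubring := by rw [← hk₁]; exact ⟨b, hb, rfl⟩
      obtain ⟨x, y, hxA, hyA, hrx, hxy⟩ := key ⟨residue B b, hrb⟩
      have h1 : b - x ∈ maximalIdeal B := by
        have h0 : residue B (b - x) = 0 := by rw [map_sub, hrx]; exact sub_self _
        exact (hres0 _).mp h0
      have h2 : (⟨b, hb⟩ - ⟨x, hxA⟩ : ↥A₁) ∈ maximalIdeal ↥A₁ := hA₁max _ h1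
      rw [hmax₁, Ideal.mem_span_singleton] at h2
      obtain ⟨a₁, ha₁⟩ := h2
      have ha₁B : b - x = (p:B) * ↑a₁ := by
        have h := congrArg (Subtype.val) ha₁
        push_cast at h
        exact h
      obtain ⟨c₁, hc₁A, hc₁⟩ := ih ↑a₁ a₁.2
      refine ⟨y + (p:B) * c₁,
        add_mem hyA (mul_mem (by exact_mod_cast natCast_mem A₂ p) hc₁A), ?_⟩
      have heq : b - (y + (p:B)*c₁) = (x - y) + (p:B) * ((↑a₁ : B) - c₁) := by
        rw [mul_sub, ← ha₁B]; ring
      rw [heq]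
      apply add_mem hxy
      rw [Ideal.mem_span_singleton] at hc₁ ⊢
      obtain ⟨t, ht⟩ := hc₁
      exact ⟨t, by rw [ht]; ring⟩
  intro a ha
  by_cases hnil : ∃ N, (p:B)^N = 0
  · obtain ⟨N, hN⟩ := hnil
    obtain ⟨c, hcA, hc⟩ := claim N a ha
    rw [Ideal.mem_span_singleton, hN, zero_dvd_iff, sub_eq_zero] at hc
    rw [hc]; exact hcA
  · push_neg at hnil
    have hne : Ideal.span {(p:B)} ≠ ⊤ := by
      rw [← hmaxB]; exact (maximalIdeal.isMaximal B).ne_top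
    have hKrull : (⨅ n : ℕ, Ideal.span {(p:B)} ^ n) = ⊥ :=
      Ideal.iInf_pow_eq_bot_of_isLocalRing _ hne
    -- p is a regular element
    have hreg : ∀ x : B, (p:B) * x = 0 → x = 0 := by
      intro x hx
      by_contra hx0
      have hex : ∃ n, x ∉ Ideal.span {(p:B)} ^ n := by
        by_contra hall
        push_neg at hall
        apply hx0
        have : x ∈ (⨅ n : ℕ, Ideal.span {(p:B)} ^ n) := Submodule.mem_iInf _ |>.mpr hall
        rw [hKrull] at this
        simpa using this
      classical
      set n := Nat.find hex with hn_def
      have hn : x ∉ Ideal.span {(p:B)} ^ n := Nat.find_spec hex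
      have hn0 : n ≠ 0 := by
        intro h
        apply hn
        rw [h, pow_zero, Ideal.one_eq_top]
        trivial
      have hmem : x ∈ Ideal.span {(p:B)} ^ (n - 1) := by
        by_contra h
        exact Nat.find_min hex (by omega) h
      rw [Ideal.span_singleton_pow, Ideal.mem_span_singleton] at hmem
      obtain ⟨y, hy⟩ := hmem
      have hyu : IsUnit y := by
        by_contra hyu
        apply hn
        rw [Ideal.span_singleton_pow, Ideal.mem_span_singleton]
        have hym : y ∈ maximalIdeal B := (IsLocalRing.mem_maximalIdeal _).mpr
          (mem_nonunits_iff.mpr hyu)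
        rw [hmaxB, Ideal.mem_span_singleton] at hym
        obtain ⟨t, ht⟩ := hym
        refine ⟨t, ?_⟩
        rw [hy, ht, ← mul_assoc, ← pow_succ]
        congr 2
        omega
      obtain ⟨u, rfl⟩ := hyu
      have h0 : (p:B)^n * ↑u = 0 := by
        have hn1 : n - 1 + 1 = n := by omega
        have hps : (p:B)^n = (p:B) * (p:B)^(n-1) := by
          conv_lhs => rw [← hn1]
          rw [pow_succ]; ring
        calc (p:B)^n * ↑u = (p:B) * ((p:B)^(n-1) * ↑u) := by
              rw [hps]; ring
          _ = (p:B) * x := by rw [hy]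
          _ = 0 := hx
      have hpn : (p:B)^n = 0 := by
        calc (p:B)^n = (p:B)^n * ↑u * ↑u⁻¹ := by rw [mul_assoc, u.mul_inv, mul_one]
          _ = 0 * ↑u⁻¹ := by rw [h0]
          _ = 0 := zero_mul _
      exact hnil n hpn
    -- purity of A₂
    have pure : ∀ n : ℕ, ∀ x : ↥A₂, (x:B) ∈ Ideal.span {(p:B)^n} →
        x ∈ Ideal.span {(p:↥A₂)^n} := by
      intro n
      induction n with
      | zero =>
        intro x _
        rw [pow_zero, Ideal.span_singleton_one]
        trivial
      | succ n ih =>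
        intro x hx
        rw [Ideal.mem_span_singleton] at hx
        obtain ⟨b, hb⟩ := hx
        have hm : (x:B) ∈ maximalIdeal B := by
          rw [hmaxB, Ideal.mem_span_singleton]
          exact ⟨(p:B)^n * b, by rw [hb]; ring⟩
        have hx2 := hA₂max x hm
        rw [hmax₂, Ideal.mem_span_singleton] at hx2
        obtain ⟨x', hx'⟩ := hx2
        have hx'B : (x:B) = (p:B) * ↑x' := by
          have h := congrArg (Subtype.val) hx'
          push_cast at h
          exact h
        have h1 : (p:B) * ((x' : B) - (p:B)^n * b) = 0 := by
          rw [mul_sub, ← hx'B, hb]; ring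
        have h2 : (x' : B) = (p:B)^n * b := sub_eq_zero.mp (hreg _ h1)
        have h3 : x' ∈ Ideal.span {(p:↥A₂)^n} := by
          apply ih
          rw [Ideal.mem_span_singleton]
          exact ⟨b, h2⟩
        rw [Ideal.mem_span_singleton] at h3 ⊢
        obtain ⟨t, ht⟩ := h3
        exact ⟨t, by rw [hx', ht]; ring⟩
    -- build the Cauchy sequence in A₂
    choose c hcA hc using fun n => claim n a ha
    set f : ℕ → ↥A₂ := fun n => ⟨c n, hcA n⟩ with hf
    have hcau : ∀ {m n : ℕ}, m ≤ n →
        f m ≡ f n [SMOD ((maximalIdeal ↥A₂) ^ m • ⊤ : Submodule ↥A₂ ↥A₂)] := by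
      intro m n hmn
      rw [Ideal.smul_eq_mul, Ideal.mul_top, SModEq.sub_mem, hmax₂,
        Ideal.span_singleton_pow]
      apply pure m
      have h1 : ((f m - f n : ↥A₂) : B) = (a - c n) - (a - c m) := by
        push_cast [hf]; ring
      rw [h1]
      have h2 : a - c n ∈ Ideal.span {(p:B)^m} := by
        rw [Ideal.mem_span_singleton]
        have h3 := hc n
        rw [Ideal.mem_span_singleton] at h3
        exact dvd_trans (pow_dvd_pow _ hmn) h3
      exact sub_mem h2 (hc m)
    obtain ⟨L, hL⟩ := IsPrecomplete.prec
      (IsAdicComplete.toIsPrecomplete (I := maximalIdeal ↥A₂) (M := ↥A₂)) hcau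
    have hfinal : ∀ n : ℕ, a - ↑L ∈ Ideal.span {(p:B)} ^ n := by
      intro n
      have h1 := (SModEq.sub_mem).mp (hL n)
      rw [Ideal.smul_eq_mul, Ideal.mul_top, hmax₂, Ideal.span_singleton_pow,
        Ideal.mem_span_singleton] at h1
      obtain ⟨t, ht⟩ := h1
      have h2 : c n - ↑L = (p:B)^n * ↑t := by
        have h := congrArg (Subtype.val) ht
        push_cast [hf] at h
        exact h
      rw [Ideal.span_singleton_pow, Ideal.mem_span_singleton]
      have h3 := hc n
      rw [Ideal.mem_span_singleton] at h3
      obtain ⟨u, hu⟩ := h3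
      refine ⟨u + t, ?_⟩
      have : a - ↑L = (a - c n) + (c n - ↑L) := by ring
      rw [this, hu, h2]; ring
    have hz : a - ↑L = 0 := by
      have hmem : a - ↑L ∈ (⨅ n : ℕ, Ideal.span {(p:B)} ^ n) :=
        Submodule.mem_iInf _ |>.mpr hfinal
      rw [hKrull] at hmem
      simpa using hmem
    have : a = ↑L := sub_eq_zero.mp hz
    rw [this]
    exact L.2
end
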